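/- arXiv:2105.06004 — 5 statements merged into one kernel-verified Lean document; each statement's English description precedes it below -/
import Mathlib

section
/- Let N, M, k be positive reals, γ, η ∈ (0,1), p_th ∈ (0,1), and set ρ = γNk/M, f(η,ρ) = (e^ρ(1−η)−1)² / (e^ρ(e^ρ(1−η)+1)), and P^UB = exp(N·H_e(γ) − M·f(η,ρ)). If N ≥ (M(1−η) + ln(p_th))/H_e(γ), then for all k > (M/(Nγ))·ln(1/(1−η)) we have P^UB > p_th. -/
noncomputable def He (p : ℝ) : ℝ := -p * Real.log p - (1 - p) * Real.log (1 - p)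

noncomputable def fEta (η ρ : ℝ) : ℝ :=
  (Real.exp ρ * (1 - η) - 1) ^ 2 / (Real.exp ρ * (Real.exp ρ * (1 - η) + 1))

noncomputable def PUB (η N M k γ : ℝ) : ℝ :=
  Real.exp (N * He γ - M * fEta η (γ * N * k / M))

theorem PUB_exceeds_threshold_of_large_N (N M : ℝ) (hN : 0 < N) (hM : 0 < M)
    (γ η p_th : ℝ) (hγ : γ ∈ Set.Ioo (0:ℝ) 1) (hη : η ∈ Set.Ioo (0:ℝ) 1)
    (hp : p_th ∈ Set.Ioo (0:ℝ) 1)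
    (hNbig : N ≥ (M * (1 - η) + Real.log p_th) / He γ) :
    ∀ k : ℝ, k > M / (N * γ) * Real.log (1 / (1 - η)) → PUB η N M k γ > p_th := by
  obtain ⟨hγ0, hγ1⟩ := hγ
  obtain ⟨hη0, hη1⟩ := hη
  obtain ⟨hp0, hp1⟩ := hp
  intro k hk
  have ha : (0:ℝ) < 1 - η := by linarith
  have hHe : 0 < He γ := by
    have h1 : Real.log γ < 0 := Real.log_neg hγ0 hγ1
    have h2 : Real.log (1 - γ) < 0 := Real.log_neg (by linarith) (by linarith)
    unfold He
    nlinarith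
  set ρ := γ * N * k / M with hρ
  have hNγ : 0 < N * γ := mul_pos hN hγ0
  have h1 : M / (N * γ) * Real.log (1 / (1 - η)) * (N * γ)
      = M * Real.log (1 / (1 - η)) := by field_simp
  have h2 : M * Real.log (1 / (1 - η)) < k * (N * γ) := by
    calc M * Real.log (1 / (1 - η))
        = M / (N * γ) * Real.log (1 / (1 - η)) * (N * γ) := h1.symm
      _ < k * (N * γ) := by exact mul_lt_mul_of_pos_right hk hNγ
  have hρgt : Real.log (1 / (1 - η)) < ρ := by
    rw [hρ, lt_div_iff₀ hM]; nlinarith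
  have hexp : 1 / (1 - η) < Real.exp ρ := by
    calc 1 / (1 - η) = Real.exp (Real.log (1 / (1 - η))) :=
          (Real.exp_log (by positivity)).symm
      _ < Real.exp ρ := Real.exp_lt_exp.mpr hρgt
  have hx : 1 < Real.exp ρ * (1 - η) := (div_lt_iff₀ ha).mp hexp
  have hxp : 0 < Real.exp ρ := Real.exp_pos ρ
  have hd : 0 < Real.exp ρ * (Real.exp ρ * (1 - η) + 1) :=
    mul_pos hxp (by nlinarith)
  have hf : fEta η ρ < 1 - η := by
    unfold fEta
    rw [div_lt_iff₀ hd]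
    nlinarith [hx, mul_pos hxp ha]
  have hNH : N * He γ ≥ M * (1 - η) + Real.log p_th := by
    rw [ge_iff_le, div_le_iff₀ hHe] at hNbig
    linarith
  have hlog : Real.log p_th < N * He γ - M * fEta η ρ := by nlinarith
  unfold PUB
  calc p_th = Real.exp (Real.log p_th) := (Real.exp_log hp0).symm
    _ < _ := Real.exp_lt_exp.mpr hlog
end

section
/- Let N, M be positive reals, γ, η ∈ (0,1), p_th ∈ (0,1), η̄ = 1−η, v = (N·H_e(γ) − ln(p_th))/M. If N < (M·η̄ + ln(p_th))/H_e(γ) (equivalently v < η̄), then for every k ≥ k_min := (M/(Nγ))·ln((−(2η̄+v) − √(8η̄v + v²)) / (2η̄(v − η̄))), the bound P^UB(η,N,M,k,γ) = exp(N·H_e(γ) − M·f(η, γNk/M)) ≤ p_th holds, where f(η,ρ) = (e^ρ(1−η)−1)²/(e^ρ(e^ρ(1−η)+1)). -/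
lemma He_pos {p : ℝ} (hp : p ∈ Set.Ioo (0:ℝ) 1) : 0 < He p := by
  obtain ⟨h0, h1⟩ := hp
  have hl1 : Real.log p < 0 := Real.log_neg h0 h1
  have hl2 : Real.log (1 - p) < 0 := Real.log_neg (by linarith) (by linarith)
  have : 0 < -p * Real.log p := by nlinarith
  have : 0 < -(1 - p) * Real.log (1 - p) := by nlinarith
  unfold He; nlinarith

theorem PUB_below_threshold_of_small_N (N M : ℝ) (hN : 0 < N) (hM : 0 < M)
    (γ η p_th : ℝ) (hγ : γ ∈ Set.Ioo (0:ℝ) 1) (hη : η ∈ Set.Ioo (0:ℝ) 1)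
    (hp : p_th ∈ Set.Ioo (0:ℝ) 1)
    (ebar v : ℝ) (hebar : ebar = 1 - η) (hv : v = (N * He γ - Real.log p_th) / M)
    (hNsmall : N < (M * ebar + Real.log p_th) / He γ) :
    ∀ k : ℝ,
      k ≥ M / (N * γ) *
        Real.log ((-(2 * ebar + v) - Real.sqrt (8 * ebar * v + v ^ 2)) / (2 * ebar * (v - ebar))) →
      PUB η N M k γ ≤ p_th := by
  intro k hk
  have hHe : 0 < He γ := He_pos hγ
  have hlp : Real.log p_th < 0 := Real.log_neg hp.1 hp.2
  have heb : 0 < ebar := by rw [hebar]; linarith [hη.2]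
  have hv0 : 0 < v := by
    rw [hv]
    apply div_pos _ hM
    nlinarith
  have hve : v < ebar := by
    have h1 : N * He γ < M * ebar + Real.log p_th := by
      have := (lt_div_iff₀ hHe).mp hNsmall
      linarith
    rw [hv]
    rw [div_lt_iff₀ hM]
    linarith
  set s := Real.sqrt (8 * ebar * v + v ^ 2) with hs
  have hD : 0 < 8 * ebar * v + v ^ 2 := by nlinarith
  have hs0 : 0 ≤ s := Real.sqrt_nonneg _
  have hs2 : s ^ 2 = 8 * ebar * v + v ^ 2 := Real.sq_sqrt hD.le
  have hden : 0 < 2 * ebar * (ebar - v) := by nlinarith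
  set A := (-(2 * ebar + v) - s) / (2 * ebar * (v - ebar)) with hA
  have hAeq : A = ((2 * ebar + v) + s) / (2 * ebar * (ebar - v)) := by
    rw [hA, div_eq_div_iff (by nlinarith) (by nlinarith)]
    ring
  have hApos : 0 < A := by
    rw [hAeq]
    apply div_pos (by nlinarith) hden
  -- ρ and x
  set ρ := γ * N * k / M with hρ
  set x := Real.exp ρ with hx
  have hx0 : 0 < x := Real.exp_pos _
  have hNγ : 0 < N * γ := mul_pos hN hγ.1
  have hρge : Real.log A ≤ ρ := by
    have h1 : M / (N * γ) * Real.log A ≤ k := hk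
    rw [hρ]
    rw [le_div_iff₀ hM]
    have h2 : M / (N * γ) * Real.log A * (N * γ) ≤ k * (N * γ) := by
      exact mul_le_mul_of_nonneg_right h1 hNγ.le
    calc Real.log A * M = M / (N * γ) * Real.log A * (N * γ) := by
          field_simp; rw [mul_div_cancel_right₀ _ hγ.1.ne']
      _ ≤ k * (N * γ) := h2
      _ = γ * N * k := by ring
  have hxA : A ≤ x := by
    calc A = Real.exp (Real.log A) := (Real.exp_log hApos).symm
      _ ≤ x := Real.exp_le_exp.mpr hρge
  have hkey : (2 * ebar + v) + s ≤ 2 * ebar * (ebar - v) * x := by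
    have := (div_le_iff₀ hden).mp (hAeq ▸ hxA)
    linarith
  -- main inequality : v ≤ fEta η ρ
  have hden2 : 0 < x * (x * ebar + 1) := by nlinarith
  have hquad : v * (x * (x * ebar + 1)) ≤ (x * ebar - 1) ^ 2 := by
    nlinarith [sq_nonneg (2 * ebar * (ebar - v) * x - ((2 * ebar + v) + s)),
      sq_nonneg (2 * ebar * (ebar - v) * x - (2 * ebar + v)), mul_pos hden hx0,
      mul_nonneg hs0 (mul_pos hden hx0).le]
  have hf : v ≤ fEta η ρ := by
    unfold fEta
    rw [← hebar, ← hx]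
    rw [le_div_iff₀ hden2]
    linarith
  -- conclude
  unfold PUB
  rw [← Real.exp_log hp.1]
  apply Real.exp_le_exp.mpr
  have h2 : M * v = N * He γ - Real.log p_th := by rw [hv]; field_simp
  have h3 := mul_le_mul_of_nonneg_left hf hM.le
  show N * He γ - M * fEta η ρ ≤ Real.log p_th
  linarith
end

section
/- (Coupon collector with group drawings) Let S be a set of s elements and A ⊆ S with |A| = l. Draw T subsets of size m independently and uniformly at random (with replacement) from the size-m subsets of S, and let X_T(A) be the number of distinct elements of A appearing in the union of the T draws. Then Prob(X_T(A) ≤ n) = Σ_{j=0}^{n} (−1)^{n−j} · C(l, j) · C(l−j−1, l−n−1) · [C(s−l+j, m)/C(s, m)]^T. -/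
open Finset

private lemma neg_one_pow_sub' {a b : ℕ} (h : b ≤ a) :
    (-1 : ℝ) ^ (a - b) = (-1) ^ a * (-1) ^ b := by
  have h1 : (-1:ℝ) ^ (a - b) * (-1) ^ b = (-1) ^ a := by
    rw [← pow_add]; congr 1; omega
  have hb : (-1:ℝ)^b * (-1)^b = 1 := by
    rw [← pow_add, neg_one_pow_eq_one_iff_even (by norm_num)]; exact ⟨b, by omega⟩
  calc (-1:ℝ)^(a-b) = (-1:ℝ)^(a-b) * ((-1)^b * (-1)^b) := by rw [hb, mul_one]
    _ = (-1)^a * (-1)^b := by rw [← mul_assoc, h1]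

private lemma alt_sum_real (n : ℕ) :
    ∑ i ∈ range (n + 1), (-1 : ℝ) ^ i * n.choose i = if n = 0 then 1 else 0 := by
  have h := @Int.alternating_sum_range_choose n
  have h2 : ((∑ i ∈ range (n + 1), (-1 : ℤ) ^ i * n.choose i : ℤ) : ℝ)
      = ∑ i ∈ range (n + 1), (-1 : ℝ) ^ i * n.choose i := by push_cast; rfl
  rw [← h2, h]; split <;> simp

private lemma inv_id (k a K : ℕ) (hk : k ≤ K) :
    ∑ t ∈ range (K + 1), (-1 : ℝ) ^ t * (k.choose t) * (t.choose a)
      = if k = a then (-1 : ℝ) ^ a else 0 := by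
  rcases lt_or_ge k a with hka | hka
  · rw [if_neg (by omega)]
    apply Finset.sum_eq_zero
    intro t ht
    rcases lt_or_ge t a with h1 | h1
    · simp [Nat.choose_eq_zero_of_lt h1]
    · simp [Nat.choose_eq_zero_of_lt (lt_of_lt_of_le hka h1)]
  · have step1 : ∑ t ∈ range (K + 1), (-1 : ℝ) ^ t * (k.choose t) * (t.choose a)
        = ∑ t ∈ Icc a K, (-1 : ℝ) ^ t * (k.choose t) * (t.choose a) := by
      refine (Finset.sum_subset (fun t ht => by simp at ht ⊢; omega) ?_).symm
      intro t ht hnt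
      simp only [mem_range, mem_Icc] at ht hnt
      have : t < a := by omega
      simp [Nat.choose_eq_zero_of_lt this]
    have step2 : ∀ t ∈ Icc a K, (-1 : ℝ) ^ t * (k.choose t) * (t.choose a)
        = (k.choose a : ℝ) * ((-1) ^ t * ((k - a).choose (t - a))) := by
      intro t ht
      simp only [mem_Icc] at ht
      rcases lt_or_ge k t with h2 | h2
      · simp [Nat.choose_eq_zero_of_lt h2,
          Nat.choose_eq_zero_of_lt (show k - a < t - a by omega)]
      · have hc := Nat.choose_mul (n := k) ht.1
        have hc' : (k.choose t : ℝ) * t.choose a = (k.choose a : ℝ) * (k-a).choose (t-a) := by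
          exact_mod_cast congrArg (Nat.cast : ℕ → ℝ) hc
        rw [mul_assoc, hc']; ring
    rw [step1, Finset.sum_congr rfl step2, ← Finset.mul_sum]
    have step3 : ∑ t ∈ Icc a K, (-1:ℝ) ^ t * ((k - a).choose (t - a))
        = ∑ u ∈ range (K - a + 1), (-1:ℝ) ^ (u + a) * ((k - a).choose u) := by
      apply Finset.sum_nbij' (fun t => t - a) (fun u => u + a)
      · intro t ht; simp at ht ⊢; omega
      · intro u hu; simp at hu ⊢; omega
      · intro t ht; simp at ht; omega
      · intro u hu; simp
      · intro t ht; simp at ht; congr 2; omega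
    rw [step3]
    have step4 : ∑ u ∈ range (K - a + 1), (-1:ℝ) ^ (u + a) * ((k - a).choose u)
        = (-1:ℝ)^a * ∑ u ∈ range (k - a + 1), (-1:ℝ) ^ u * ((k - a).choose u) := by
      rw [Finset.mul_sum]
      refine (Finset.sum_subset (fun u hu => by simp at hu ⊢; omega) ?_).symm.trans
        (Finset.sum_congr rfl fun u hu => by rw [pow_add]; ring)
      intro u hu hnu
      simp only [mem_range] at hu hnu
      simp [Nat.choose_eq_zero_of_lt (show k - a < u by omega)]
    rw [step4, alt_sum_real]
    rcases eq_or_lt_of_le hka with h | h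
    · simp [← h]
    · rw [if_neg (by omega), if_neg (by omega)]; simp

private lemma bonf (r0 L : ℕ) (h1 : 1 ≤ r0) (hr0L : r0 ≤ L) : ∀ k, k ≤ L →
    ∑ r ∈ Icc r0 L, (-1:ℝ)^(r - r0) * ((r-1).choose (r0-1)) * (k.choose r)
      = if r0 ≤ k then 1 else 0 := by
  intro k
  induction k with
  | zero =>
    intro _
    rw [if_neg (by omega)]
    apply Finset.sum_eq_zero
    intro r hr
    simp only [mem_Icc] at hr
    simp [Nat.choose_eq_zero_of_lt (show 0 < r by omega)]
  | succ k ih =>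
    intro hkL
    have ihk := ih (by omega)
    have split : ∀ r ∈ Icc r0 L, (-1:ℝ)^(r - r0) * ((r-1).choose (r0-1)) * ((k+1).choose r)
        = (-1:ℝ)^(r - r0) * ((r-1).choose (r0-1)) * (k.choose r)
          + (-1:ℝ)^(r - r0) * ((r-1).choose (r0-1)) * (k.choose (r-1)) := by
      intro r hr
      simp only [mem_Icc] at hr
      have hr1 : r - 1 + 1 = r := by omega
      have h2 : (k+1).choose (r-1+1) = k.choose (r-1) + k.choose (r-1+1) :=
        Nat.choose_succ_succ' k (r-1)
      rw [hr1] at h2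
      rw [h2]; push_cast; ring
    rw [Finset.sum_congr rfl split, Finset.sum_add_distrib, ihk]
    have hT : ∑ r ∈ Icc r0 L, (-1:ℝ)^(r - r0) * ((r-1).choose (r0-1)) * (k.choose (r-1))
        = if k = r0 - 1 then 1 else 0 := by
      have re : ∑ r ∈ Icc r0 L, (-1:ℝ)^(r - r0) * ((r-1).choose (r0-1)) * (k.choose (r-1))
          = ∑ t ∈ Icc (r0-1) (L-1), (-1:ℝ)^(t - (r0-1)) * (t.choose (r0-1)) * (k.choose t) := by
        apply Finset.sum_nbij' (fun r => r - 1) (fun t => t + 1)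
        · intro r hr; simp only [mem_Icc] at hr ⊢; omega
        · intro t ht; simp only [mem_Icc] at ht ⊢; omega
        · intro r hr; simp only [mem_Icc] at hr; omega
        · intro t ht; simp
        · intro r hr; simp only [mem_Icc] at hr
          have he : r - r0 = r - 1 - (r0 - 1) := by omega
          rw [he]
      have e1 : ∑ t ∈ Icc (r0-1) (L-1), (-1:ℝ)^(t - (r0-1)) * (t.choose (r0-1)) * (k.choose t)
          = ∑ t ∈ range ((L-1) + 1), (-1:ℝ)^(t - (r0-1)) * (t.choose (r0-1)) * (k.choose t) := by
        apply Finset.sum_subset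
        · intro t ht; simp only [mem_Icc] at ht; simp only [mem_range]; omega
        · intro t ht hnt
          simp only [mem_range, mem_Icc] at ht hnt
          simp [Nat.choose_eq_zero_of_lt (show t < r0 - 1 by omega)]
      have e2 : ∑ t ∈ range ((L-1) + 1), (-1:ℝ)^(t - (r0-1)) * (t.choose (r0-1)) * (k.choose t)
          = (-1:ℝ)^(r0-1)
            * ∑ t ∈ range ((L-1) + 1), (-1:ℝ)^t * (k.choose t) * (t.choose (r0-1)) := by
        rw [Finset.mul_sum]
        apply Finset.sum_congr rfl
        intro t ht
        rcases le_or_gt (r0-1) t with h | h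
        · rw [neg_one_pow_sub' h]; ring
        · simp [Nat.choose_eq_zero_of_lt h]
      rw [re, e1, e2, inv_id k (r0-1) (L-1) (by omega)]
      split
      · rw [← pow_add, neg_one_pow_eq_one_iff_even (by norm_num)]
        exact ⟨r0-1, by omega⟩
      · simp
    rw [hT]
    by_cases h : r0 ≤ k
    · rw [if_pos h, if_neg (by omega), if_pos (by omega)]; norm_num
    · by_cases h2 : k = r0 - 1
      · rw [if_neg h, if_pos h2, if_pos (by omega)]; norm_num
      · rw [if_neg h, if_neg h2, if_neg (by omega)]; norm_num

private lemma count_avoid_single (s m : ℕ) (D : Finset (Fin s)) :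
    (univ.filter fun B : {B : Finset (Fin s) // B.card = m} =>
        Disjoint D (B : Finset (Fin s))).card
      = (s - D.card).choose m := by
  rw [show s - D.card = Dᶜ.card from by rw [Finset.card_compl, Fintype.card_fin],
    ← Finset.card_powersetCard m Dᶜ]
  refine Finset.card_nbij (fun B => (B : Finset (Fin s))) ?_ ?_ ?_
  · intro B hB
    simp only [Finset.mem_coe, mem_filter, mem_univ, true_and] at hB
    rw [Finset.mem_coe, Finset.mem_powersetCard]
    exact ⟨le_compl_iff_disjoint_left.2 hB, B.2⟩
  · intro B1 _ B2 _ h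
    exact Subtype.ext h
  · intro C hC
    rw [Finset.coe_filter]
    rw [Finset.mem_coe, Finset.mem_powersetCard] at hC
    exact ⟨⟨C, hC.2⟩, by simpa using le_compl_iff_disjoint_left.1 hC.1, rfl⟩

private lemma count_avoid (s m T : ℕ) (D : Finset (Fin s)) :
    (univ.filter fun f : Fin T → {B : Finset (Fin s) // B.card = m} =>
        ∀ i, Disjoint D ((f i : Finset (Fin s)))).card
      = ((s - D.card).choose m) ^ T := by
  have he : (univ.filter fun f : Fin T → {B : Finset (Fin s) // B.card = m} =>
        ∀ i, Disjoint D ((f i : Finset (Fin s))))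
      = Fintype.piFinset (fun _ : Fin T =>
          univ.filter fun B : {B : Finset (Fin s) // B.card = m} =>
            Disjoint D (B : Finset (Fin s))) := by
    ext f
    simp [Fintype.mem_piFinset]
  rw [he, Fintype.card_piFinset]
  simp [count_avoid_single]

private lemma sum_choose_missed (s l m T r : ℕ) (A : Finset (Fin s)) (hA : A.card = l) :
    ∑ f : Fin T → {B : Finset (Fin s) // B.card = m},
        ((A \ univ.biUnion fun i => ((f i : Finset (Fin s)))).card).choose r
      = l.choose r * ((s - r).choose m) ^ T := by
  classical
  set U : (Fin T → {B : Finset (Fin s) // B.card = m}) → Finset (Fin s) :=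
    fun f => univ.biUnion fun i => ((f i : Finset (Fin s))) with hU
  have h1 : ∀ f, ((A \ U f).card).choose r
      = ((A.powersetCard r).filter fun D => D ⊆ A \ U f).card := by
    intro f
    rw [show (A.powersetCard r).filter (fun D => D ⊆ A \ U f) = (A \ U f).powersetCard r from ?_,
      Finset.card_powersetCard]
    ext D
    simp only [mem_filter, Finset.mem_powersetCard]
    constructor
    · rintro ⟨⟨_, hc⟩, hsub⟩; exact ⟨hsub, hc⟩
    · rintro ⟨hsub, hc⟩; exact ⟨⟨hsub.trans sdiff_subset, hc⟩, hsub⟩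
  simp only [hU] at h1
  simp_rw [h1, Finset.card_filter]
  rw [Finset.sum_comm]
  have h2 : ∀ D ∈ A.powersetCard r,
      (∑ f : Fin T → {B : Finset (Fin s) // B.card = m}, if D ⊆ A \ U f then 1 else 0)
        = ((s - r).choose m) ^ T := by
    intro D hD
    rw [Finset.mem_powersetCard] at hD
    rw [← Finset.card_filter]
    rw [show (univ.filter fun f => D ⊆ A \ U f)
        = (univ.filter fun f : Fin T → {B : Finset (Fin s) // B.card = m} =>
            ∀ i, Disjoint D ((f i : Finset (Fin s)))) from ?_]
    · rw [count_avoid, hD.2]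
    · ext f
      simp only [mem_filter, mem_univ, true_and, Finset.subset_sdiff, hU,
        Finset.disjoint_biUnion_right]
      tauto
  rw [Finset.sum_congr rfl h2, Finset.sum_const, Finset.card_powersetCard, hA, smul_eq_mul]

theorem coupon_collector_group_drawings
    (s l m n T : ℕ) (hls : l ≤ s) (hms : m ≤ s) (hnl : n < l)
    (A : Finset (Fin s)) (hA : A.card = l) :
    (Nat.card {f : Fin T → {B : Finset (Fin s) // B.card = m} //
        (A ∩ Finset.univ.biUnion (fun i => ((f i : {B : Finset (Fin s) // B.card = m}) : Finset (Fin s)))).card ≤ n} : ℝ)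
      / (Nat.card {B : Finset (Fin s) // B.card = m} : ℝ) ^ T
    = ∑ j ∈ Finset.range (n + 1), (-1 : ℝ) ^ (n - j) * (l.choose j) *
        ((l - j - 1).choose (l - n - 1)) * (((s - l + j).choose m : ℝ) / (s.choose m)) ^ T := by
  classical
  set U : (Fin T → {B : Finset (Fin s) // B.card = m}) → Finset (Fin s) :=
    fun f => univ.biUnion fun i => ((f i : Finset (Fin s))) with hU
  have hden : (Nat.card {B : Finset (Fin s) // B.card = m}) = s.choose m := by
    simp [Nat.card_eq_fintype_card]
  have hnum : Nat.card {f : Fin T → {B : Finset (Fin s) // B.card = m} //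
        (A ∩ U f).card ≤ n}
      = (univ.filter fun f : Fin T → {B : Finset (Fin s) // B.card = m} =>
          (A ∩ U f).card ≤ n).card := by
    rw [Nat.card_eq_fintype_card, Fintype.card_subtype]
  have hkl : ∀ f, (A \ U f).card ≤ l := fun f => hA ▸ Finset.card_le_card sdiff_subset
  have hiff : ∀ f, ((A ∩ U f).card ≤ n ↔ l - n ≤ (A \ U f).card) := by
    intro f
    have h := Finset.card_inter_add_card_sdiff A (U f)
    rw [hA] at h
    omega
  have key : (((univ.filter fun f : Fin T → {B : Finset (Fin s) // B.card = m} =>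
          (A ∩ U f).card ≤ n).card : ℕ) : ℝ)
      = ∑ j ∈ Finset.range (n + 1), (-1 : ℝ) ^ (n - j) * (l.choose j) *
          ((l - j - 1).choose (l - n - 1)) * (((s - l + j).choose m : ℝ)) ^ T := by
    rw [Finset.card_filter]
    push_cast
    calc ∑ f : Fin T → {B : Finset (Fin s) // B.card = m},
            (if (A ∩ U f).card ≤ n then (1:ℝ) else 0)
        = ∑ f : Fin T → {B : Finset (Fin s) // B.card = m},
            (if l - n ≤ (A \ U f).card then (1:ℝ) else 0) := by
          exact Finset.sum_congr rfl fun f _ => by rw [if_congr (hiff f) rfl rfl]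
      _ = ∑ f : Fin T → {B : Finset (Fin s) // B.card = m},
            ∑ r ∈ Icc (l-n) l, (-1:ℝ)^(r - (l-n)) * ((r-1).choose (l-n-1))
              * (((A \ U f).card).choose r) := by
          exact Finset.sum_congr rfl fun f _ =>
            (bonf (l-n) l (by omega) (by omega) _ (hkl f)).symm
      _ = ∑ r ∈ Icc (l-n) l, ∑ f : Fin T → {B : Finset (Fin s) // B.card = m},
            (-1:ℝ)^(r - (l-n)) * ((r-1).choose (l-n-1)) * (((A \ U f).card).choose r) :=
          Finset.sum_comm
      _ = ∑ r ∈ Icc (l-n) l, (-1:ℝ)^(r - (l-n)) * ((r-1).choose (l-n-1))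
            * (l.choose r * ((s - r).choose m) ^ T : ℕ) := by
          refine Finset.sum_congr rfl fun r _ => ?_
          rw [← Finset.mul_sum]
          congr 1
          rw [← Nat.cast_sum]
          exact congrArg _ (sum_choose_missed s l m T r A hA)
      _ = ∑ j ∈ Finset.range (n + 1), (-1 : ℝ) ^ (n - j) * (l.choose j) *
            ((l - j - 1).choose (l - n - 1)) * (((s - l + j).choose m : ℝ)) ^ T := by
          apply Finset.sum_nbij' (fun r => l - r) (fun j => l - j)
          · intro r hr; simp only [mem_Icc, mem_range] at hr ⊢; omega
          · intro j hj; simp only [mem_Icc, mem_range] at hj ⊢; omega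
          · intro r hr; simp only [mem_Icc] at hr; omega
          · intro j hj; simp only [mem_range] at hj; omega
          · intro r hr
            simp only [mem_Icc] at hr
            have e1 : n - (l - r) = r - (l - n) := by omega
            have e2 : l - (l - r) - 1 = r - 1 := by omega
            have e3 : s - l + (l - r) = s - r := by omega
            rw [e1, e2, e3, Nat.choose_symm (by omega : r ≤ l)]
            push_cast
            ring
  rw [hnum, hden, key, Finset.sum_div]
  refine Finset.sum_congr rfl fun j hj => ?_
  rw [div_pow]
  ring
end

section
/- Every stopping set of a Tanner graph with all variable-node degrees at least 2 contains a cycle; in particular, if the girth of the Tanner graph is g, every nonempty stopping set has size at least g/4 (since a cycle of length 2c involves c variable nodes and the shortest cycle has length ≥ g). -/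
/-- The Tanner graph of the adjacency relation `adj`, as a simple graph on `V ⊕ C`. -/
def tannerGraph {V C : Type*} (adj : V → C → Prop) : SimpleGraph (V ⊕ C) where
  Adj a b :=
    (∃ v c, a = Sum.inl v ∧ b = Sum.inr c ∧ adj v c) ∨
    (∃ v c, a = Sum.inr c ∧ b = Sum.inl v ∧ adj v c)
  symm := by
    constructor
    rintro a b (⟨v, c, rfl, rfl, h⟩ | ⟨v, c, rfl, rfl, h⟩)
    · exact Or.inr ⟨v, c, rfl, rfl, h⟩
    · exact Or.inl ⟨v, c, rfl, rfl, h⟩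
  loopless := by
    constructor
    rintro a (⟨v, c, rfl, h, _⟩ | ⟨v, c, rfl, h, _⟩) <;> simp at h

lemma tanner_adj_iff {V C : Type*} (adj : V → C → Prop) (a b : V ⊕ C) :
    (tannerGraph adj).Adj a b ↔
      (∃ v c, a = Sum.inl v ∧ b = Sum.inr c ∧ adj v c) ∨
      (∃ v c, a = Sum.inr c ∧ b = Sum.inl v ∧ adj v c) := Iff.rfl

/-- Alternation lemma: in any walk on a Tanner graph, the number of left (variable)
vertices in the support is at least half the length. -/
lemma tanner_alt {V C : Type*} {adj : V → C → Prop} {a b : V ⊕ C}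
    (p : (tannerGraph adj).Walk a b) :
    p.length + (if a.isLeft then 1 else 0) ≤ 2 * p.support.countP (fun x => x.isLeft) := by
  induction p with
  | nil => simp [List.countP_cons]; split <;> omega
  | @cons a a' b h p ih =>
    simp only [SimpleGraph.Walk.length_cons, SimpleGraph.Walk.support_cons, List.countP_cons]
    rcases h with ⟨v, c, rfl, rfl, _⟩ | ⟨v, c, rfl, rfl, _⟩ <;>
      simp only [Sum.isLeft_inl, Sum.isLeft_inr, if_true, if_false, decide_true, decide_false] at ih ⊢ <;> omega

lemma walk_concat_cases {V' : Type*} {G : SimpleGraph V'} {a b : V'} (p : G.Walk a b) :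
    p.edges = [] ∨ ∃ (y : V') (r : G.Walk a y) (h : G.Adj y b), p = r.concat h := by
  cases p with
  | nil => exact Or.inl rfl
  | cons h' p' => exact Or.inr (SimpleGraph.Walk.exists_cons_eq_concat h' p')

theorem stopping_set_contains_cycle_and_girth_bound
    {V C : Type*} [Fintype V] [Fintype C] [DecidableEq V] [DecidableEq C]
    (adj : V → C → Prop) [∀ c, DecidablePred (fun v => adj v c)]
    [DecidableRel (tannerGraph adj).Adj]
    -- every variable node has degree at least 2
    (hdeg : ∀ v : V, 2 ≤ (Finset.univ.filter (fun c => adj v c)).card)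
    (S : Finset V) (hSne : S.Nonempty)
    -- S is a stopping set
    (hstop : ∀ c : C, (S.filter (fun v => adj v c)).Nonempty →
      2 ≤ (S.filter (fun v => adj v c)).card) :
    (∃ (u : V ⊕ C) (w : (tannerGraph adj).Walk u u), w.IsCycle ∧
      ∀ v : V, Sum.inl v ∈ w.support → v ∈ S) ∧
    (tannerGraph adj).girth ≤ (4 * S.card : ℕ) := by
  classical
  set G := tannerGraph adj with hG
  -- the "relevant" vertex set: S-variables and checks adjacent to S
  let T : V ⊕ C → Prop := fun x =>
    Sum.elim (fun v => v ∈ S) (fun c => (S.filter (fun v => adj v c)).Nonempty) x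
  -- every vertex of T has a T-neighbor different from any prescribed vertex z
  have hnb : ∀ b : V ⊕ C, T b → ∀ z : V ⊕ C, ∃ x, G.Adj b x ∧ T x ∧ x ≠ z := by
    rintro (v | c) hb z
    · have h2 := hdeg v
      have hx : ∃ c ∈ Finset.univ.filter (fun c => adj v c), (Sum.inr c : V ⊕ C) ≠ z := by
        by_contra hc
        push_neg at hc
        have hle : (Finset.univ.filter (fun c => adj v c)).card ≤ 1 := by
          refine Finset.card_le_one.mpr fun a ha b hb => ?_
          have h1 := hc a ha
          have h2 := hc b hb
          rw [← h2] at h1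
          exact Sum.inr.inj h1
        omega
      obtain ⟨c, hc, hne⟩ := hx
      simp only [Finset.mem_filter] at hc
      exact ⟨Sum.inr c, Or.inl ⟨v, c, rfl, rfl, hc.2⟩,
        ⟨v, Finset.mem_filter.mpr ⟨hb, hc.2⟩⟩, hne⟩
    · have h2 := hstop c hb
      have hx : ∃ v ∈ S.filter (fun v => adj v c), (Sum.inl v : V ⊕ C) ≠ z := by
        by_contra hc
        push_neg at hc
        have hle : (S.filter (fun v => adj v c)).card ≤ 1 := by
          refine Finset.card_le_one.mpr fun a ha b hb => ?_
          have h1 := hc a ha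
          have h2 := hc b hb
          rw [← h2] at h1
          exact Sum.inl.inj h1
        omega
      obtain ⟨v, hv, hne⟩ := hx
      simp only [Finset.mem_filter] at hv
      exact ⟨Sum.inl v, Or.inr ⟨v, c, rfl, rfl, hv.2⟩, hv.1, hne⟩
  -- maximal path inside T
  let P : ℕ → Prop := fun n => ∃ (a b : V ⊕ C) (p : G.Walk a b),
    p.IsPath ∧ (∀ x ∈ p.support, T x) ∧ p.length = n
  obtain ⟨v0, hv0⟩ := hSne
  have hP0 : P 0 := by
    refine ⟨Sum.inl v0, Sum.inl v0, SimpleGraph.Walk.nil, ?_, ?_, rfl⟩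
    · simp
    · intro x hx
      simp only [SimpleGraph.Walk.support_nil, List.mem_singleton] at hx
      subst hx
      exact hv0
  set N := Fintype.card (V ⊕ C) with hN
  haveI : DecidablePred P := Classical.decPred P
  set M := Nat.findGreatest P N with hM
  have hPM : P M := Nat.findGreatest_spec (Nat.zero_le N) hP0
  obtain ⟨a, b, p, hp, hTp, hlen⟩ := hPM
  -- maximality: every T-neighbor of b is on p
  have hmem : ∀ x, G.Adj b x → T x → x ∈ p.support := by
    intro x hadj hTx
    by_contra hxs
    have hq : (p.concat hadj).IsPath := by
      refine SimpleGraph.Walk.IsPath.mk' ?_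
      rw [SimpleGraph.Walk.support_concat, List.nodup_append]
      exact ⟨hp.support_nodup, List.nodup_singleton x, fun a ha b hb hab => hxs (by rw [List.mem_singleton] at hb; rw [← hb, ← hab]; exact ha)⟩
    have hPM1 : P (M + 1) := by
      refine ⟨a, x, p.concat hadj, hq, ?_, ?_⟩
      · intro y hy
        rw [SimpleGraph.Walk.support_concat] at hy
        simp only [List.concat_eq_append, List.mem_append, List.mem_singleton] at hy
        rcases hy with hy | rfl
        · exact hTp y hy
        · exact hTx
      · rw [SimpleGraph.Walk.length_concat, hlen]
    have hle : M + 1 ≤ N := le_of_lt (by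
      have := hq.length_lt
      rwa [SimpleGraph.Walk.length_concat, hlen] at this)
    have := Nat.le_findGreatest hle hPM1
    omega
  have hTb : T b := hTp b p.end_mem_support
  -- find a T-neighbor x of b such that the edge b-x is not an edge of p
  have hkey : ∃ x, G.Adj b x ∧ T x ∧ s(b, x) ∉ p.edges := by
    rcases walk_concat_cases p with hnil | ⟨y, r, h'', hc⟩
    · obtain ⟨x, hadj, hTx, _⟩ := hnb b hTb b
      exact ⟨x, hadj, hTx, by rw [hnil]; simp⟩
    · obtain ⟨x, hadj, hTx, hne⟩ := hnb b hTb y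
      refine ⟨x, hadj, hTx, ?_⟩
      rw [hc, SimpleGraph.Walk.edges_concat]
      intro hmem'
      rw [List.concat_eq_append] at hmem'
      rcases List.mem_append.mp hmem' with hmem' | hmem'
      · have hbr : b ∈ r.support := SimpleGraph.Walk.fst_mem_support_of_mem_edges r hmem'
        have hnd : (r.concat h'').support.Nodup := by
          rw [← hc]; exact hp.support_nodup
        rw [SimpleGraph.Walk.support_concat] at hnd
        simp only [List.concat_eq_append, List.nodup_append, List.mem_singleton] at hnd
        exact hnd.2.2 _ hbr b rfl rfl
      · simp only [List.mem_singleton, Sym2.eq, Sym2.rel_iff', Prod.mk.injEq,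
          Prod.swap_prod_mk] at hmem'
        rcases hmem' with ⟨hby, rfl⟩ | ⟨-, rfl⟩
        · exact G.irrefl hadj
        · exact hne rfl
  obtain ⟨x, hadj, hTx, hedge⟩ := hkey
  have hx : x ∈ p.support := hmem x hadj hTx
  set q := p.dropUntil x hx with hq
  have hqpath : q.IsPath := hp.dropUntil hx
  have hqedge : s(b, x) ∉ q.edges := fun h =>
    hedge (SimpleGraph.Walk.edges_dropUntil_subset p hx h)
  set w : G.Walk b b := SimpleGraph.Walk.cons hadj q with hw
  have hcyc : w.IsCycle := (SimpleGraph.Walk.cons_isCycle_iff q hadj).mpr ⟨hqpath, hqedge⟩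
  have hTw : ∀ y ∈ w.support, T y := by
    intro y hy
    rw [hw, SimpleGraph.Walk.support_cons] at hy
    rcases List.mem_cons.mp hy with rfl | hy
    · exact hTb
    · exact hTp y (SimpleGraph.Walk.support_dropUntil_subset p hx hy)
  -- bound on the length of the cycle
  have hScard : 1 ≤ S.card := Finset.card_pos.mpr ⟨v0, hv0⟩
  have hcount : w.support.tail.countP (fun x => x.isLeft) ≤ S.card := by
    set L := w.support.tail.filter (fun x => x.isLeft) with hL
    have hnodL : L.Nodup := hcyc.support_nodup.filter _
    have hLlen : w.support.tail.countP (fun x => x.isLeft) = L.length :=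
      List.countP_eq_length_filter
    have hsub : L.toFinset ⊆ S.image Sum.inl := by
      intro y hy
      rw [List.mem_toFinset, hL, List.mem_filter] at hy
      have hys : y ∈ w.support := by
        rw [SimpleGraph.Walk.support_eq_cons]
        exact List.mem_cons_of_mem _ hy.1
      have hTy := hTw y hys
      cases y with
      | inl v => exact Finset.mem_image.mpr ⟨v, hTy, rfl⟩
      | inr c => simp at hy
    calc w.support.tail.countP (fun x => x.isLeft) = L.length := hLlen
      _ = L.toFinset.card := (List.toFinset_card_of_nodup hnodL).symm
      _ ≤ (S.image Sum.inl).card := Finset.card_le_card hsub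
      _ ≤ S.card := Finset.card_image_le
  have hlen4 : w.length ≤ 4 * S.card := by
    have halt := tanner_alt w
    have hsupp : w.support.countP (fun x => x.isLeft)
        ≤ w.support.tail.countP (fun x => x.isLeft) + 1 := by
      conv_lhs => rw [SimpleGraph.Walk.support_eq_cons]
      rw [List.countP_cons]
      split <;> omega
    have h1 : w.length ≤ 2 * w.support.countP (fun x => x.isLeft) := by
      refine le_trans ?_ halt; omega
    omega
  constructor
  · exact ⟨b, w, hcyc, fun v hv => hTw (Sum.inl v) hv⟩
  · have h1 : G.egirth ≤ (w.length : ℕ∞) := by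
      refine iInf_le_of_le b ?_
      refine iInf_le_of_le w ?_
      exact iInf_le_of_le hcyc le_rfl
    have h2 : G.girth ≤ w.length := by
      have := ENat.toNat_le_toNat h1 (by simp)
      simpa [SimpleGraph.girth] using this
    exact le_trans h2 hlen4
end

section
/- If N < N^UB := (M(1−η) + ln(p_th))/H_e(γ) and k^f_min := (M/(Nγ))·ln((−(2η̄+v) − √(8η̄v + v²))/(2η̄(v−η̄))) with η̄ = 1−η and v = (N·H_e(γ) − ln(p_th))/M, then the argument of the logarithm in k^f_min is strictly greater than 1/η̄, so k^f_min > (M/(Nγ))·ln(1/η̄). -/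
theorem kfmin_exceeds_naive_bound (M N : ℝ) (hM : 0 < M) (hN : 0 < N)
    (γ η p_th : ℝ) (hγ : γ ∈ Set.Ioo (0:ℝ) 1) (hη : η ∈ Set.Ioo (0:ℝ) 1)
    (hp : p_th ∈ Set.Ioo (0:ℝ) 1)
    (ebar v : ℝ) (hebar : ebar = 1 - η) (hv : v = (N * He γ - Real.log p_th) / M)
    (hNsmall : N < (M * (1 - η) + Real.log p_th) / He γ) :
    1 / ebar < (-(2 * ebar + v) - Real.sqrt (8 * ebar * v + v ^ 2)) / (2 * ebar * (v - ebar)) ∧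
    M / (N * γ) * Real.log (1 / ebar) <
      M / (N * γ) *
        Real.log ((-(2 * ebar + v) - Real.sqrt (8 * ebar * v + v ^ 2)) / (2 * ebar * (v - ebar))) := by
  obtain ⟨hγ0, hγ1⟩ := hγ
  obtain ⟨hη0, hη1⟩ := hη
  obtain ⟨hp0, hp1⟩ := hp
  have hlg : Real.log γ < 0 := Real.log_neg hγ0 hγ1
  have hlg' : Real.log (1 - γ) < 0 := Real.log_neg (by linarith) (by linarith)
  have hHe : 0 < He γ := by unfold He; nlinarith
  have hlogp : Real.log p_th < 0 := Real.log_neg hp0 hp1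
  have heb : 0 < ebar := by rw [hebar]; linarith
  have hv0 : 0 < v := by
    rw [hv]
    apply div_pos _ hM
    nlinarith
  have hvb : v < ebar := by
    rw [hv, hebar]
    rw [lt_div_iff₀ hHe] at hNsmall
    rw [div_lt_iff₀ hM]
    linarith
  have hsq : 0 ≤ Real.sqrt (8 * ebar * v + v ^ 2) := Real.sqrt_nonneg _
  have hden : 2 * ebar * (v - ebar) < 0 := by nlinarith
  have h1 : 1 / ebar < (-(2 * ebar + v) - Real.sqrt (8 * ebar * v + v ^ 2)) /
      (2 * ebar * (v - ebar)) := by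
    rw [lt_div_iff_of_neg hden]
    have heq : 1 / ebar * (2 * ebar * (v - ebar)) = 2 * (v - ebar) := by
      field_simp
    rw [heq]
    linarith
  refine ⟨h1, ?_⟩
  have hcoef : 0 < M / (N * γ) := div_pos hM (mul_pos hN hγ0)
  exact mul_lt_mul_of_pos_left (Real.log_lt_log (one_div_pos.mpr heb) h1) hcoef
end
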